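/- A sequence P of nonnegative integers is loop graphic if and only if P is mirror bigraphic. -/
import Mathlib


open Finset

/-- Degree of a left vertex in a bipartite graph given by a Boolean relation. -/
def degA {α β : Type} [Fintype β] (R : α → β → Bool) (a : α) : ℕ :=
  (univ.filter fun b => R a b = true).card

/-- Degree of a right vertex. -/
def degB {α β : Type} [Fintype α] (R : α → β → Bool) (b : β) : ℕ :=
  (univ.filter fun a => R a b = true).card

/-- A bipartite graph is mirror if there is a bijection φ between the stable sets
such that `u φ(v)` is an edge iff `φ(u) v` is an edge. -/
def IsMirror {α β : Type} (R : α → β → Bool) : Prop :=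
  ∃ φ : α ≃ β, ∀ u v : α, R u (φ v) = R v (φ u)

/-- Multiset of left degrees. -/
def degSeqA {α β : Type} [Fintype α] [Fintype β] (R : α → β → Bool) : Multiset ℕ :=
  Multiset.map (degA R) Finset.univ.val

/-- Multiset of right degrees. -/
def degSeqB {α β : Type} [Fintype α] [Fintype β] (R : α → β → Bool) : Multiset ℕ :=
  Multiset.map (degB R) Finset.univ.val

/-- A pair of multisets is bigraphic if realized by the two sides of a bipartite graph. -/
def IsBigraphic (P Q : Multiset ℕ) : Prop :=
  ∃ (n m : ℕ) (R : Fin n → Fin m → Bool), degSeqA R = P ∧ degSeqB R = Q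

/-- `P` is mirror bigraphic if a mirror bipartite graph realizes `(P, P)`. -/
def IsMirrorBigraphic (P : Multiset ℕ) : Prop :=
  ∃ (n : ℕ) (R : Fin n → Fin n → Bool),
    IsMirror R ∧ degSeqA R = P ∧ degSeqB R = P

/-- `P` is loop graphic: realized by an `l`-graph (symmetric Boolean relation, a loop
at `a` being `L a a = true`, contributing exactly 1 to the degree of `a`). -/
def IsLoopGraphic (P : Multiset ℕ) : Prop :=
  ∃ (n : ℕ) (L : Fin n → Fin n → Bool), (∀ a b, L a b = L b a) ∧
    Multiset.map (fun a => (univ.filter fun b => L a b = true).card) Finset.univ.val = P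

lemma card_filter_equiv {n : ℕ} (φ : Fin n ≃ Fin n) (p : Fin n → Bool) :
    (univ.filter fun b => p (φ b) = true).card = (univ.filter fun b => p b = true).card := by
  apply Finset.card_bij (fun b _ => φ b)
  · intro a ha; simp_all
  · intro a _ b _ h; exact φ.injective h
  · intro b hb; exact ⟨φ.symm b, by simp_all, by simp⟩

/-- A sequence is loop graphic iff it is mirror bigraphic. -/
theorem stmt_5 (P : Multiset ℕ) : IsLoopGraphic P ↔ IsMirrorBigraphic P := by
  constructor
  · rintro ⟨n, L, hsym, hdeg⟩
    refine ⟨n, L, ⟨Equiv.refl _, fun u v => by simp [hsym u v]⟩, ?_, ?_⟩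
    · exact hdeg
    · rw [← hdeg]
      unfold degSeqB
      congr 1
      funext b
      unfold degB
      congr 1
      apply Finset.filter_congr
      intro a _
      simp [hsym a b]
  · rintro ⟨n, R, ⟨φ, hφ⟩, hA, _⟩
    refine ⟨n, fun a b => R a (φ b), fun a b => hφ a b, ?_⟩
    rw [← hA]
    unfold degSeqA degA
    congr 1
    funext a
    exact card_filter_equiv φ (fun b => R a b)
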